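/- Let R be a commutative ring, g ∈ R[[x]] a formal power series with constant coefficient 1, and c ∈ R. Let h ∈ R[[q]] be the unique formal power series with zero constant term satisfying h = q·g(h), and let h′ be its formal derivative with respect to q. Write g_c(x) = g(c·x) (the rescaling of g, again with constant coefficient 1, hence invertible). Then for every n ≥ 0 the coefficient of q^n in (c·h·g_c(h)^{−1})·h′ equals the coefficient of x^n in c·x·g(x)^{n+1}·g_c(x)^{−1}. -/

import Mathlib

open PowerSeries

/-- Substitution `g(h)` of a power series `h` with zero constant term into a power
series `g`: the coefficient of `q^m` is `∑_{n ≤ m} (coeff n g) · (coeff m (h^n))`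
(only finitely many terms contribute since `h` has zero constant term). -/
noncomputable def substPS {R : Type*} [CommRing R] (h g : PowerSeries R) : PowerSeries R :=
  PowerSeries.mk fun m =>
    ∑ n ∈ Finset.range (m + 1), PowerSeries.coeff n g * PowerSeries.coeff m (h ^ n)

/-!
Lagrange–Bürmann: if `h = q·g(h)` then `[q^n] F(h)·h' = [x^n] F·g^(n+1)` for every `F`.
Over a ring without additive torsion this goes by induction on `n`. Writing
`F = F(0) + x·F₁` and `h·F₁(h) = q·(g F₁)(h)` reduces the claim at `n` to the case `F = 1` at
`n` and the claim for `g F₁` at `n - 1`. For `F = 1`, differentiating `h = q·g(h)` (chain rule)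
and `g^(n+1)` shows that `n` times either side of `[q^n] h' = [x^n] g^(n+1)` equals
`(n+1)·[x^(n-1)] g'·g^n`, by the claim for `F = g'` at `n - 1`; then cancel `n`.
Over a general ring, `g` and `F` are images of universal series over the torsion-free ring
`ℤ[gₖ, Fₖ]`, where `h` exists as the compositional inverse of `x / g(x)`; since `h` is unique,
the identity transports. The theorem is the case `F = x·g_c⁻¹`.
-/

namespace PowerSeries

variable {R : Type*} [CommRing R]

theorem substPS_eq_subst {h : R⟦X⟧} (hh0 : constantCoeff h = 0) (g : R⟦X⟧) :
    substPS h g = g.subst h := by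
  ext m
  rw [substPS, coeff_mk, coeff_subst' (HasSubst.of_constantCoeff_zero' hh0),
    finsum_eq_sum_of_support_subset _ (s := Finset.range (m + 1))]
  · simp only [smul_eq_mul]
  · intro k hk
    by_contra hkm
    simp only [Finset.coe_range, Set.mem_Iio, not_lt] at hkm
    have hpow : coeff m (h ^ k) = 0 :=
      X_pow_dvd_iff.mp (pow_dvd_pow_of_dvd (X_dvd_iff.mpr hh0) k) m (by omega)
    exact hk (by dsimp only; rw [hpow, smul_zero])

theorem subst_eq_C_add_mul_subst {a : R⟦X⟧} (ha : HasSubst a) (F : R⟦X⟧) :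
    F.subst a = C (constantCoeff F) + a * (mk fun p => coeff (p + 1) F).subst a := by
  conv_lhs => rw [eq_X_mul_shift_add_const F]
  rw [subst_add ha, subst_mul ha, subst_X ha, subst_C, add_comm]
  rfl

theorem map_derivative {S : Type*} [CommRing S] (φ : R →+* S) (f : R⟦X⟧) :
    map φ (d⁄dX R f) = d⁄dX S (map φ f) := by
  ext n
  simp [coeff_derivative]

section Lagrange

variable {g h : R⟦X⟧} (hh0 : constantCoeff h = 0) (hh : h = X * g.subst h)
include hh0 hh

theorem derivative_eq_of_eq_X_mul_subst :
    d⁄dX R h = g.subst h + X * ((d⁄dX R g).subst h * d⁄dX R h) := by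
  conv_lhs => rw [hh]
  rw [Derivation.leibniz, derivative_X, derivative_subst (HasSubst.of_constantCoeff_zero' hh0),
    smul_eq_mul, smul_eq_mul, mul_one, add_comm]

theorem subst_mul_derivative_eq_of_eq_X_mul_subst (F : R⟦X⟧) :
    F.subst h * d⁄dX R h = C (constantCoeff F) * d⁄dX R h +
      X * ((g * mk fun p => coeff (p + 1) F).subst h * d⁄dX R h) := by
  have hs := HasSubst.of_constantCoeff_zero' hh0
  have hshift : h * (mk fun p => coeff (p + 1) F).subst h =
      X * (g * mk fun p => coeff (p + 1) F).subst h := by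
    rw [subst_mul hs, ← mul_assoc, ← hh]
  rw [subst_eq_C_add_mul_subst hs F, add_mul, hshift, mul_assoc]

theorem constantCoeff_derivative_of_eq_X_mul_subst :
    constantCoeff (d⁄dX R h) = constantCoeff g := by
  rw [derivative_eq_of_eq_X_mul_subst hh0 hh, map_add, map_mul, constantCoeff_X, zero_mul,
    add_zero, subst_eq_C_add_mul_subst (HasSubst.of_constantCoeff_zero' hh0), map_add,
    map_mul, hh0, zero_mul, add_zero, constantCoeff_C]

theorem coeff_succ_derivative_of_eq_X_mul_subst [IsAddTorsionFree R] {m : ℕ}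
    (ih : ∀ F : R⟦X⟧, coeff m (F.subst h * d⁄dX R h) = coeff m (F * g ^ (m + 1))) :
    coeff (m + 1) (d⁄dX R h) = coeff (m + 1) (g ^ (m + 2)) := by
  set A := coeff m (d⁄dX R g * g ^ (m + 1))
  have hA : coeff m ((d⁄dX R g).subst h * d⁄dX R h) = A := ih _
  have h_dh : coeff (m + 1) (d⁄dX R h) = coeff (m + 1) (g.subst h) + A := by
    conv_lhs => rw [derivative_eq_of_eq_X_mul_subst hh0 hh]
    rw [map_add, coeff_succ_X_mul, hA]
  have h_gh : coeff (m + 1) (g.subst h) * (m + 1) = A := by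
    rw [← coeff_derivative, derivative_subst (HasSubst.of_constantCoeff_zero' hh0), hA]
  have h_gpow : coeff (m + 1) (g ^ (m + 2)) * (m + 1) = (m + 2) * A := by
    rw [← coeff_derivative, derivative_pow, Nat.add_succ_sub_one, ← map_natCast (C (R := R)),
      mul_assoc, coeff_C_mul, mul_comm (g ^ _)]
    push_cast
    rfl
  apply (nsmul_right_inj (Nat.succ_ne_zero m)).mp
  simp only [nsmul_eq_mul]
  push_cast
  linear_combination (↑m + 1 : R) * h_dh + h_gh - h_gpow

theorem coeff_subst_mul_derivative_of_isAddTorsionFree [IsAddTorsionFree R] (n : ℕ)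
    (F : R⟦X⟧) : coeff n (F.subst h * d⁄dX R h) = coeff n (F * g ^ (n + 1)) := by
  induction n generalizing F with
  | zero =>
    rw [subst_mul_derivative_eq_of_eq_X_mul_subst hh0 hh F]
    conv_rhs => rw [eq_X_mul_shift_add_const F]
    simp [coeff_zero_eq_constantCoeff, constantCoeff_derivative_of_eq_X_mul_subst hh0 hh]
  | succ m ih =>
    rw [subst_mul_derivative_eq_of_eq_X_mul_subst hh0 hh F, map_add, coeff_C_mul,
      coeff_succ_X_mul, ih, coeff_succ_derivative_of_eq_X_mul_subst hh0 hh ih]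
    have hF : F * g ^ (m + 1 + 1) = C (constantCoeff F) * g ^ (m + 2) +
        X * ((g * mk fun p => coeff (p + 1) F) * g ^ (m + 1)) := by
      conv_lhs => rw [eq_X_mul_shift_add_const F]
      ring
    rw [hF, map_add, coeff_C_mul, coeff_succ_X_mul]

end Lagrange

theorem eq_substInvOfIsUnit_of_subst_eq_X {P h : R⟦X⟧} (hP0 : constantCoeff P = 0)
    (hP1 : IsUnit (coeff 1 P)) (hs : HasSubst h) (hPh : P.subst h = X) :
    h = P.substInvOfIsUnit hP1 :=
  calc h = subst h (X : R⟦X⟧) := (subst_X hs).symm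
    _ = subst h (subst P (P.substInvOfIsUnit hP1)) := by
      rw [subst_substInvOfIsUnit_left P hP0]
    _ = subst (subst h P) (P.substInvOfIsUnit hP1) := by
      rw [subst_comp_subst_apply (HasSubst.of_constantCoeff_zero' hP0) hs]
    _ = P.substInvOfIsUnit hP1 := by rw [hPh, X_subst]

theorem constantCoeff_X_mul (f : R⟦X⟧) : constantCoeff (X * f) = 0 := by
  rw [map_mul, constantCoeff_X, zero_mul]

theorem isUnit_coeff_one_X_mul_invOfUnit (g : R⟦X⟧) : IsUnit (coeff 1 (X * invOfUnit g 1)) := by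
  rw [coeff_succ_X_mul, coeff_zero_eq_constantCoeff_apply, constantCoeff_invOfUnit, inv_one,
    Units.val_one]
  exact isUnit_one

section Solution

variable {g : R⟦X⟧} (hg : constantCoeff g = 1)
include hg

theorem eq_X_mul_subst_iff {h : R⟦X⟧} (hs : HasSubst h) :
    h = X * g.subst h ↔ (X * invOfUnit g 1).subst h = X := by
  have hinv : g.subst h * (invOfUnit g 1).subst h = 1 := by
    rw [← subst_mul hs, mul_invOfUnit g 1 (by rw [hg, Units.val_one]), ← map_one C, subst_C]
    rfl
  rw [subst_mul hs, subst_X hs]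
  constructor
  · intro hh
    linear_combination (invOfUnit g 1).subst h * hh + X * hinv
  · intro hP
    linear_combination g.subst h * hP - h * hinv

theorem exists_eq_X_mul_subst : ∃ h : R⟦X⟧, constantCoeff h = 0 ∧ h = X * g.subst h :=
  ⟨_, constantCoeff_substInvOfIsUnit _ (isUnit_coeff_one_X_mul_invOfUnit g),
    (eq_X_mul_subst_iff hg (HasSubst.substInvOfIsUnit _ _)).mpr
      (subst_substInvOfIsUnit_right _ (constantCoeff_X_mul _) _)⟩

theorem eq_of_eq_X_mul_subst {h₁ h₂ : R⟦X⟧} (h₁0 : constantCoeff h₁ = 0)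
    (h₂0 : constantCoeff h₂ = 0) (hh₁ : h₁ = X * g.subst h₁) (hh₂ : h₂ = X * g.subst h₂) :
    h₁ = h₂ := by
  have hs₁ := HasSubst.of_constantCoeff_zero' h₁0
  have hs₂ := HasSubst.of_constantCoeff_zero' h₂0
  rw [eq_substInvOfIsUnit_of_subst_eq_X (constantCoeff_X_mul _)
      (isUnit_coeff_one_X_mul_invOfUnit g) hs₁ ((eq_X_mul_subst_iff hg hs₁).mp hh₁),
    eq_substInvOfIsUnit_of_subst_eq_X (constantCoeff_X_mul _)
      (isUnit_coeff_one_X_mul_invOfUnit g) hs₂ ((eq_X_mul_subst_iff hg hs₂).mp hh₂)]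

end Solution

theorem coeff_subst_mul_derivative {g h : R⟦X⟧} (hg : constantCoeff g = 1)
    (hh0 : constantCoeff h = 0) (hh : h = X * g.subst h) (n : ℕ) (F : R⟦X⟧) :
    coeff n (F.subst h * d⁄dX R h) = coeff n (F * g ^ (n + 1)) := by
  let φ : MvPolynomial (ℕ ⊕ ℕ) ℤ →+* R := MvPolynomial.eval₂Hom (Int.castRingHom R)
    (Sum.elim (fun k => coeff (k + 1) g) (fun k => coeff k F))
  let G : (MvPolynomial (ℕ ⊕ ℕ) ℤ)⟦X⟧ := X * (mk fun k => MvPolynomial.X (Sum.inl k)) + C 1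
  let FU : (MvPolynomial (ℕ ⊕ ℕ) ℤ)⟦X⟧ := mk fun k => MvPolynomial.X (Sum.inr k)
  have hG : map φ G = g := by
    conv_rhs => rw [eq_X_mul_shift_add_const g, hg]
    rw [map_add, map_mul, map_X, map_C, map_one]
    congr 2
    ext k
    simp [φ]
  have hFU : map φ FU = F := by
    ext k
    simp [FU, φ]
  obtain ⟨H, hH0, hH⟩ := exists_eq_X_mul_subst (g := G) (by simp [G])
  have hmap (f : (MvPolynomial (ℕ ⊕ ℕ) ℤ)⟦X⟧) : map φ (f.subst H) = (map φ f).subst (map φ H) :=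
    map_subst (HasSubst.of_constantCoeff_zero' hH0) f
  have hHh : map φ H = h := by
    refine eq_of_eq_X_mul_subst hg ?_ hh0 ?_ hh
    · rw [← coeff_zero_eq_constantCoeff_apply, coeff_map, coeff_zero_eq_constantCoeff_apply,
        hH0, map_zero]
    · conv_lhs => rw [hH]
      rw [map_mul, map_X, hmap, hG]
  calc coeff n (F.subst h * d⁄dX R h) = φ (coeff n (FU.subst H * d⁄dX _ H)) := by
        rw [← coeff_map, map_mul (map φ), hmap, map_derivative, hFU, hHh]
    _ = φ (coeff n (FU * G ^ (n + 1))) := by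
        rw [coeff_subst_mul_derivative_of_isAddTorsionFree hH0 hH]
    _ = coeff n (F * g ^ (n + 1)) := by
        rw [← coeff_map, map_mul (map φ), map_pow, hFU, hG]

end PowerSeries

/-- Lagrange–Bürmann with a rescaled twist: if `g` has constant coefficient `1`,
`h` is the unique series with zero constant term satisfying `h = q·g(h)`, and
`g_c(x) = g(c·x)` (with inverse `g_c⁻¹ = invOfUnit g_c 1`), then the coefficient
of `q^n` in `(c·h·g_c(h)⁻¹)·h'` equals the coefficient of `x^n` in
`c·x·g(x)^{n+1}·g_c(x)⁻¹`. -/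
theorem stmt9 (R : Type*) [CommRing R] (g : PowerSeries R)
    (hg : PowerSeries.constantCoeff g = 1) (c : R)
    (h : PowerSeries R) (hh0 : PowerSeries.constantCoeff h = 0)
    (hh : h = PowerSeries.X * substPS h g) :
    ∀ n : ℕ,
      PowerSeries.coeff n
        ((PowerSeries.C c * h *
            substPS h (PowerSeries.invOfUnit (PowerSeries.rescale c g) 1)) *
          h.derivativeFun) =
      PowerSeries.coeff n
        (PowerSeries.C c * PowerSeries.X * g ^ (n + 1) *
          PowerSeries.invOfUnit (PowerSeries.rescale c g) 1) := by
  intro n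
  have hs := HasSubst.of_constantCoeff_zero' hh0
  rw [substPS_eq_subst hh0] at hh ⊢
  set Gc := invOfUnit (rescale c g) 1
  change coeff n (C c * h * Gc.subst h * d⁄dX R h) = _
  have hlhs : C c * h * Gc.subst h * d⁄dX R h = C c * ((X * Gc).subst h * d⁄dX R h) := by
    rw [subst_mul hs, subst_X hs]
    ring
  have hrhs : C c * X * g ^ (n + 1) * Gc = C c * (X * Gc * g ^ (n + 1)) := by ring
  rw [hlhs, hrhs, coeff_C_mul, coeff_C_mul,
    coeff_subst_mul_derivative hg hh0 hh]
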